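/- Let u : [0,T] → ℝ be continuous with u(t) ∈ [0,1] for all t, let w₀ ∈ [0, A(a+1)²/4], and let w(t) = e^{−εt}·w₀ + ε·A·e^{−εt}·∫₀ᵗ ((1+a)·u(s) − u(s)²)·e^{εs} ds. Then w(t) ∈ [0, A(a+1)²/4] for all t ∈ [0,T]. -/
import Mathlib


open intervalIntegral

theorem recovery_invariant_interval (A ε a T : ℝ) (hA : 0 < A) (hε : 0 < ε)
    (ha0 : 0 < a) (ha1 : a < 1) (hT : 0 < T)
    (u : ℝ → ℝ) (hu : Continuous u)
    (hrange : ∀ t ∈ Set.Icc (0:ℝ) T, u t ∈ Set.Icc (0:ℝ) 1)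
    (w₀ : ℝ) (hw₀ : w₀ ∈ Set.Icc (0:ℝ) (A * (a + 1)^2 / 4))
    (w : ℝ → ℝ)
    (hw : ∀ t, w t = Real.exp (-ε * t) * w₀ +
      ε * A * Real.exp (-ε * t) *
        ∫ s in (0:ℝ)..t, ((1 + a) * u s - (u s)^2) * Real.exp (ε * s)) :
    ∀ t ∈ Set.Icc (0:ℝ) T, w t ∈ Set.Icc (0:ℝ) (A * (a + 1)^2 / 4) := by
  intro t ht
  obtain ⟨ht0, htT⟩ := ht
  have hE := Real.exp_pos (-ε * t)
  have hint : IntervalIntegrable (fun s => ((1 + a) * u s - (u s)^2) * Real.exp (ε * s))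
      MeasureTheory.volume 0 t := by
    apply Continuous.intervalIntegrable
    continuity
  have hnonneg : ∀ s ∈ Set.Icc (0:ℝ) t, 0 ≤ ((1 + a) * u s - (u s)^2) * Real.exp (ε * s) := by
    intro s hs
    have hus := hrange s ⟨hs.1, hs.2.trans htT⟩
    have he := (Real.exp_pos (ε * s)).le
    have h1 : 0 ≤ (1 + a) * u s - (u s)^2 := by nlinarith [hus.1, hus.2]
    exact mul_nonneg h1 he
  have hIge : 0 ≤ ∫ s in (0:ℝ)..t, ((1 + a) * u s - (u s)^2) * Real.exp (ε * s) :=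
    intervalIntegral.integral_nonneg ht0 hnonneg
  have hIle : (∫ s in (0:ℝ)..t, ((1 + a) * u s - (u s)^2) * Real.exp (ε * s))
      ≤ ∫ s in (0:ℝ)..t, ((1 + a)^2 / 4) * Real.exp (ε * s) := by
    apply intervalIntegral.integral_mono_on ht0 hint
    · apply Continuous.intervalIntegrable
      continuity
    · intro s hs
      have hus := hrange s ⟨hs.1, hs.2.trans htT⟩
      have he := (Real.exp_pos (ε * s)).le
      nlinarith [hus.1, hus.2, sq_nonneg ((1 + a) / 2 - u s),
        mul_nonneg (sq_nonneg ((1 + a) / 2 - u s)) he]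
  have hexp : (∫ s in (0:ℝ)..t, Real.exp (ε * s)) = (Real.exp (ε * t) - 1) / ε := by
    have := intervalIntegral.integral_comp_mul_left (a := (0:ℝ)) (b := t)
      (fun x => Real.exp x) (ne_of_gt hε)
    rw [this]
    simp [Real.exp_zero, smul_eq_mul, mul_zero]
    ring
  have hIle' : (∫ s in (0:ℝ)..t, ((1 + a) * u s - (u s)^2) * Real.exp (ε * s))
      ≤ (1 + a)^2 / 4 * ((Real.exp (ε * t) - 1) / ε) := by
    calc _ ≤ ∫ s in (0:ℝ)..t, ((1 + a)^2 / 4) * Real.exp (ε * s) := hIle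
    _ = (1 + a)^2 / 4 * ∫ s in (0:ℝ)..t, Real.exp (ε * s) := by
        rw [intervalIntegral.integral_const_mul]
    _ = _ := by rw [hexp]
  rw [hw t]
  constructor
  · have h1 : 0 ≤ Real.exp (-ε * t) * w₀ := mul_nonneg hE.le hw₀.1
    have h2 : 0 ≤ ε * A * Real.exp (-ε * t) := by positivity
    nlinarith [mul_nonneg h2 hIge]
  · have hEF : Real.exp (-ε * t) * Real.exp (ε * t) = 1 := by
      rw [← Real.exp_add]; ring_nf; exact Real.exp_zero
    have key : ε * A * Real.exp (-ε * t) *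
        (∫ s in (0:ℝ)..t, ((1 + a) * u s - (u s)^2) * Real.exp (ε * s)) ≤
        ε * A * Real.exp (-ε * t) * ((1 + a)^2 / 4 * ((Real.exp (ε * t) - 1) / ε)) := by
      apply mul_le_mul_of_nonneg_left hIle' (by positivity)
    have hw0M : w₀ ≤ A * (a + 1)^2 / 4 := hw₀.2
    have hbound : Real.exp (-ε * t) * w₀ +
        ε * A * Real.exp (-ε * t) * ((1 + a)^2 / 4 * ((Real.exp (ε * t) - 1) / ε))
        ≤ A * (a + 1)^2 / 4 := by
      have hεne : ε ≠ 0 := ne_of_gt hε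
      have h3 : Real.exp (-ε * t) * (Real.exp (ε * t) - 1) = 1 - Real.exp (-ε * t) := by
        rw [mul_sub, hEF]; ring
      have h4 : ε * A * Real.exp (-ε * t) * ((1 + a)^2 / 4 * ((Real.exp (ε * t) - 1) / ε))
          = A * (a + 1)^2 / 4 * (Real.exp (-ε * t) * (Real.exp (ε * t) - 1)) := by
        field_simp; ring
      rw [h4, h3]
      nlinarith [mul_le_mul_of_nonneg_left hw0M hE.le]
    linarith [key]
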